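/- For each m, the matrix D^{(m)} = −n(e_m 1^T + 1 e_m^T − 2 e_m e_m^T) + 2(11^T − I) is a symmetric hollow matrix satisfying Δ^T Δ D^{(m)} = n D^{(m)}, and the span of {D^{(1)},...,D^{(n)}} has dimension n−1 (since Σ_m D^{(m)} = 0). -/
import Mathlib


open Matrix BigOperators Finset

noncomputable def QOp (n : ℕ) : Module.End ℝ (Matrix (Fin n) (Fin n) ℝ) where
  toFun D := Matrix.of fun i j =>
    if i = j then 0 else
      2 * ((n : ℝ) - 1) * D i j
        - ∑ k ∈ Finset.univ.filter (· ≠ i), D i k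
        - ∑ k ∈ Finset.univ.filter (· ≠ j), D j k
  map_add' A B := by
    ext i j
    by_cases h : i = j <;> simp [h, Matrix.add_apply, Finset.sum_add_distrib] <;> ring
  map_smul' c A := by
    ext i j
    by_cases h : i = j <;> simp [h, Matrix.smul_apply, Finset.mul_sum, Finset.sum_div] <;> ring_nf <;> simp [Finset.mul_sum]

/-- The matrices `D^{(m)} = -n(e_m 1ᵀ + 1 e_mᵀ - 2 e_m e_mᵀ) + 2(11ᵀ - I)`. -/
noncomputable def Dm (n : ℕ) (m : Fin n) : Matrix (Fin n) (Fin n) ℝ :=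
  (-(n : ℝ)) • (Matrix.vecMulVec (Pi.single m 1) (fun _ => 1)
      + Matrix.vecMulVec (fun _ => 1) (Pi.single m 1)
      - (2 : ℝ) • Matrix.vecMulVec (Pi.single m 1) (Pi.single m 1))
    + (2 : ℝ) • (Matrix.vecMulVec (fun _ => 1) (fun _ => 1) - 1)

set_option linter.unnecessarySeqFocus false
set_option linter.unreachableTactic false
set_option linter.unusedTactic false
set_option linter.unusedVariables false

lemma Dm_apply (n : ℕ) (m i j : Fin n) :
    Dm n m i j = if i = j then 0 else if i = m ∨ j = m then 2 - (n:ℝ) else 2 := by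
  simp only [Dm, Matrix.add_apply, Matrix.smul_apply, Matrix.sub_apply, Matrix.vecMulVec_apply,
    Matrix.one_apply, Pi.single_apply, smul_eq_mul]
  by_cases hij : i = j <;> by_cases him : i = m <;> by_cases hjm : j = m <;>
    simp [hij, him, hjm] <;> ring_nf <;> simp_all <;> ring

lemma Dm_symm (n : ℕ) (m : Fin n) : (Dm n m)ᵀ = Dm n m := by
  ext i j
  rw [Matrix.transpose_apply, Dm_apply, Dm_apply]
  by_cases hij : i = j <;> simp [hij, Ne.symm, or_comm] <;> simp [eq_comm (a := i) (b := j), hij]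

lemma Dm_hollow (n : ℕ) (m i : Fin n) : Dm n m i i = 0 := by
  rw [Dm_apply, if_pos rfl]

lemma Dm_sum (n : ℕ) (hn : 3 ≤ n) : (∑ m, Dm n m) = 0 := by
  ext i j
  rw [Matrix.sum_apply]
  by_cases hij : i = j
  · simp [hij, Dm_hollow]
  · have hg : ∀ m ∈ Finset.univ, Dm n m i j
        = 2 + (if m = i then (-(n:ℝ)) else 0) + (if m = j then (-(n:ℝ)) else 0) := by
      intro m _
      rw [Dm_apply, if_neg hij]
      by_cases him : i = m <;> by_cases hjm : j = m
      · exact absurd (him.trans hjm.symm) hij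
      · rw [if_pos (Or.inl him), if_pos him.symm, if_neg (Ne.symm hjm)]; ring
      · rw [if_pos (Or.inr hjm), if_neg (Ne.symm him), if_pos hjm.symm]; ring
      · rw [if_neg (by tauto), if_neg (Ne.symm him), if_neg (Ne.symm hjm)]; ring
    rw [Finset.sum_congr rfl hg]
    simp only [Finset.sum_add_distrib, Finset.sum_const, Finset.sum_ite_eq',
      Finset.mem_univ, if_pos, Finset.card_univ, Fintype.card_fin, nsmul_eq_mul,
      Matrix.zero_apply]
    ring

lemma rowsum (n : ℕ) (m i : Fin n) :
    ∑ k ∈ Finset.univ.filter (· ≠ i), Dm n m i k =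
      if i = m then ((n:ℝ)-1)*(2-n) else (n:ℝ)-2 := by
  have h1 : (1:ℕ) ≤ n := Nat.one_le_of_lt (Fin.pos i)
  have hcard : (Finset.univ.erase i).card = n - 1 := by
    simp [Finset.card_erase_of_mem]
  rw [Finset.filter_ne']
  by_cases him : i = m
  · subst him
    have hg : ∀ k ∈ Finset.univ.erase i, Dm n i i k = 2 - (n:ℝ) := by
      intro k hk
      have := Finset.ne_of_mem_erase hk
      rw [Dm_apply]
      simp [Ne.symm this]
    rw [Finset.sum_congr rfl hg, Finset.sum_const, hcard, if_pos rfl, nsmul_eq_mul,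
      Nat.cast_sub h1]
    push_cast
    ring
  · have hm : m ∈ Finset.univ.erase i := by simp [Ne.symm him]
    have hg : ∀ k ∈ Finset.univ.erase i, Dm n m i k
        = 2 + (if k = m then (-(n:ℝ)) else 0) := by
      intro k hk
      have hki := Finset.ne_of_mem_erase hk
      rw [Dm_apply]
      by_cases hkm : k = m <;> simp [Ne.symm hki, him, hkm] <;> ring
    rw [Finset.sum_congr rfl hg, Finset.sum_add_distrib, Finset.sum_const, hcard,
      Finset.sum_ite_eq' _ m _, if_pos hm, if_neg him, nsmul_eq_mul, Nat.cast_sub h1]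
    push_cast
    ring

lemma Dm_eig (n : ℕ) (m : Fin n) : QOp n (Dm n m) = (n : ℝ) • Dm n m := by
  ext i j
  simp only [QOp, LinearMap.coe_mk, AddHom.coe_mk, Matrix.of_apply, Matrix.smul_apply,
    smul_eq_mul]
  rw [Dm_apply (j := j)]
  by_cases hij : i = j
  · rw [if_pos hij, if_pos hij, mul_zero]
  · rw [if_neg hij, if_neg hij, rowsum, rowsum]
    by_cases him : i = m <;> by_cases hjm : j = m
    · exact absurd (him.trans hjm.symm) hij
    · simp [him, hjm]; ring
    · simp [him, hjm]; ring
    · simp only [him, hjm, or_self, if_neg him, if_neg hjm, if_false,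
        if_neg (show ¬(i = m ∨ j = m) by tauto)]; ring

noncomputable def phiD (n : ℕ) : (Fin n → ℝ) →ₗ[ℝ] Matrix (Fin n) (Fin n) ℝ where
  toFun c := ∑ m, c m • Dm n m
  map_add' a b := by simp [add_smul, Finset.sum_add_distrib]
  map_smul' r a := by simp [smul_smul, Finset.smul_sum]

lemma phiD_range (n : ℕ) :
    LinearMap.range (phiD n) = Submodule.span ℝ (Set.range (Dm n)) := by
  apply le_antisymm
  · rintro x ⟨c, rfl⟩
    show (∑ m, c m • Dm n m) ∈ _
    exact Submodule.sum_mem _ fun m _ =>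
      Submodule.smul_mem _ _ (Submodule.subset_span (Set.mem_range_self m))
  · rw [Submodule.span_le]
    rintro x ⟨m, rfl⟩
    exact ⟨Pi.single m 1, by simp [phiD, Pi.single_apply, ite_smul, Finset.sum_ite_eq']⟩

lemma phiD_ker (n : ℕ) (hn : 3 ≤ n) :
    LinearMap.ker (phiD n) = Submodule.span ℝ {fun _ => (1:ℝ)} := by
  have hn0 : (n:ℝ) ≠ 0 := by positivity
  apply le_antisymm
  · intro c hc
    rw [LinearMap.mem_ker] at hc
    have hc' : ∀ i j : Fin n, i ≠ j → (n:ℝ) * (c i + c j) = 2 * ∑ m, c m := by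
      intro i j hij
      have h0 : (∑ m, c m • Dm n m) i j = 0 := by
        rw [show (∑ m, c m • Dm n m) = 0 from hc]; simp
      rw [Matrix.sum_apply] at h0
      simp only [Matrix.smul_apply, smul_eq_mul] at h0
      have hg : ∀ m ∈ Finset.univ, c m * Dm n m i j
          = c m * 2 + (if m = i then -(n:ℝ) * c m else 0)
            + (if m = j then -(n:ℝ) * c m else 0) := by
        intro m _
        rw [Dm_apply, if_neg hij]
        by_cases him : i = m <;> by_cases hjm : j = m
        · exact absurd (him.trans hjm.symm) hij
        · simp [him, hjm]; rw [if_neg (fun h => hjm h.symm)]; ring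
        · simp [him, hjm]; rw [if_neg (fun h => him h.symm)]; ring
        · rw [if_neg (show ¬(i = m ∨ j = m) by tauto), if_neg (Ne.symm him),
            if_neg (Ne.symm hjm)]; ring
      rw [Finset.sum_congr rfl hg, Finset.sum_add_distrib, Finset.sum_add_distrib,
        Finset.sum_ite_eq' _ i _, Finset.sum_ite_eq' _ j _, if_pos (Finset.mem_univ i),
        if_pos (Finset.mem_univ j), ← Finset.sum_mul] at h0
      linarith [h0]
    have hconst : ∀ j k : Fin n, c j = c k := by
      intro j k
      rcases eq_or_ne j k with rfl | hjk
      · rfl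
      · obtain ⟨i, hij, hik⟩ : ∃ i : Fin n, i ≠ j ∧ i ≠ k := by
          by_contra h
          push_neg at h
          have hsub : (Finset.univ : Finset (Fin n)) ⊆ {j, k} := by
            intro x _
            by_cases hxj : x = j
            · simp [hxj]
            · simp [h x hxj]
          have := Finset.card_le_card hsub
          simp only [Finset.card_univ, Fintype.card_fin] at this
          have h2 : ({j, k} : Finset (Fin n)).card ≤ 2 :=
            (Finset.card_insert_le _ _).trans (by simp)
          omega
        have h1 := hc' i j hij
        have h2 := hc' i k hik
        have := mul_left_cancel₀ hn0 (h1.trans h2.symm)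
        linarith
    have hpos : 0 < n := by omega
    rw [Submodule.mem_span_singleton]
    exact ⟨c ⟨0, hpos⟩, funext fun j => by simp [hconst j ⟨0, hpos⟩]⟩
  · rw [Submodule.span_le, Set.singleton_subset_iff]
    rw [SetLike.mem_coe, LinearMap.mem_ker]
    show (∑ m, (1:ℝ) • Dm n m) = 0
    simp [Dm_sum n hn]

lemma Dm_rank (n : ℕ) (hn : 3 ≤ n) :
    Module.finrank ℝ (Submodule.span ℝ (Set.range (Dm n))) = n - 1 := by
  have hone : (fun _ => (1:ℝ)) ≠ (0 : Fin n → ℝ) := by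
    intro h
    have := congrFun h ⟨0, by omega⟩
    norm_num at this
  have h := LinearMap.finrank_range_add_finrank_ker (phiD n)
  rw [phiD_range, phiD_ker n hn] at h
  have hk : Module.finrank ℝ (Submodule.span ℝ {fun _ => (1:ℝ)} :
      Submodule ℝ (Fin n → ℝ)) = 1 := finrank_span_singleton hone
  rw [hk, Module.finrank_pi, Fintype.card_fin] at h
  omega

/-- Each `D^{(m)}` is a symmetric hollow matrix, is an eigenvector of `Δᵀ Δ` with
eigenvalue `n`, they sum to zero, and their span has dimension `n - 1`. -/
theorem Dm_eigen (n : ℕ) (hn : 3 ≤ n) :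
    (∀ m : Fin n, (Dm n m)ᵀ = Dm n m ∧ (∀ i, Dm n m i i = 0) ∧
        QOp n (Dm n m) = (n : ℝ) • Dm n m) ∧
    (∑ m, Dm n m) = 0 ∧
    Module.finrank ℝ (Submodule.span ℝ (Set.range (Dm n))) = n - 1 :=
  ⟨fun m => ⟨Dm_symm n m, Dm_hollow n m, Dm_eig n m⟩, Dm_sum n hn, Dm_rank n hn⟩
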